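/- arXiv:2512.23621 — 3 statements merged into one kernel-verified Lean document; each statement's English description precedes it below -/
import Mathlib

section
/- Let L : H → H be a compact self-adjoint nonnegative operator on a Hilbert space, B = L², and λ > 0. Then for every φ ∈ H, ‖(B + λI)^{-1} L φ‖ ≤ √(N(λ)/λ) ‖φ‖, where N(λ) = Tr(B(B + λI)^{-1}). -/
open ContinuousLinearMap
open scoped RealInnerProductSpace

/-- For a compact self-adjoint nonnegative Hilbert–Schmidt operator `L` diagonal in a
Hilbert basis `e` with eigenvalues `σ j ≥ 0`, `B = L²` and `Binv = (B + λI)⁻¹`,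
one has `‖(B + λI)⁻¹ L φ‖ ≤ √(N(λ)/λ) ‖φ‖`, where
`N(λ) = Tr(B(B+λI)⁻¹) = Σ σ_j²/(σ_j²+λ)`. -/
theorem stmt9 {H : Type*} [NormedAddCommGroup H] [InnerProductSpace ℝ H] [CompleteSpace H]
    (L Binv : H →L[ℝ] H) (lam : ℝ) (hlam : 0 < lam)
    (e : HilbertBasis ℕ ℝ H)
    (σ : ℕ → ℝ) (hσ : ∀ j, 0 ≤ σ j) (hL : ∀ j, L (e j) = σ j • e j)
    (hHS : Summable fun j => σ j ^ 2)
    (hB1 : Binv ∘L (L ∘L L + lam • ContinuousLinearMap.id ℝ H) = ContinuousLinearMap.id ℝ H)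
    (hB2 : (L ∘L L + lam • ContinuousLinearMap.id ℝ H) ∘L Binv = ContinuousLinearMap.id ℝ H)
    (N : ℝ) (hN : N = ∑' j, σ j ^ 2 / (σ j ^ 2 + lam)) :
    ∀ φ : H, ‖(Binv ∘L L) φ‖ ≤ Real.sqrt (N / lam) * ‖φ‖ := by
  intro φ
  have hpos : ∀ j, 0 < σ j ^ 2 + lam := fun j => by positivity
  -- L is "self-adjoint" against basis vectors
  have hsa : ∀ j (y : H), ⟪(e j : H), L y⟫ = σ j * ⟪(e j : H), y⟫ := by
    intro j y
    have hd : Dense (Submodule.span ℝ (Set.range e) : Set H) :=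
      Submodule.dense_iff_topologicalClosure_eq_top.mpr e.dense_span
    have hext : (innerSL ℝ (e j : H)).comp L = σ j • innerSL ℝ (e j : H) := by
      refine ContinuousLinearMap.ext_on hd ?_
      rintro _ ⟨i, rfl⟩
      simp only [ContinuousLinearMap.comp_apply, ContinuousLinearMap.smul_apply, innerSL_apply_apply,
        hL i, inner_smul_right, smul_eq_mul]
      rcases eq_or_ne i j with rfl | hij
      · ring
      · have h0 : ⟪(e j : H), (e i : H)⟫ = 0 := e.orthonormal.2 hij.symm
        rw [h0]; ring
    have := congrFun (congrArg DFunLike.coe hext) y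
    simpa using this
  set χ := Binv (L φ) with hχ
  have hBχ : L (L χ) + lam • χ = L φ := by
    have := congrFun (congrArg DFunLike.coe hB2) (L φ)
    simpa [hχ] using this
  -- coefficients of χ
  have hcoef : ∀ j, ⟪(e j : H), χ⟫ = σ j * ⟪(e j : H), φ⟫ / (σ j ^ 2 + lam) := by
    intro j
    have h1 : ⟪(e j : H), L φ⟫ = σ j ^ 2 * ⟪(e j : H), χ⟫ + lam * ⟪(e j : H), χ⟫ := by
      rw [← hBχ, inner_add_right, inner_smul_right, hsa, hsa]; ring
    have h2 : ⟪(e j : H), L φ⟫ = σ j * ⟪(e j : H), φ⟫ := hsa j φ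
    field_simp
    nlinarith [h1, h2]
  -- summability of N's terms and N ≥ single term
  have hgsum : Summable fun j => σ j ^ 2 / (σ j ^ 2 + lam) := by
    refine Summable.of_nonneg_of_le (fun j => by positivity)
      (fun j => ?_) (hHS.div_const lam)
    exact div_le_div_of_nonneg_left (by positivity) hlam (by nlinarith [sq_nonneg (σ j)])
  have hNj : ∀ j, σ j ^ 2 / (σ j ^ 2 + lam) ≤ N := by
    intro j
    rw [hN]
    exact Summable.le_tsum hgsum j (fun i _ => by positivity)
  have hN0 : 0 ≤ N := le_trans (by positivity) (hNj 0)
  -- Parseval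
  have hχsum : HasSum (fun j => ⟪χ, (e j : H)⟫ * ⟪(e j : H), χ⟫) (‖χ‖ ^ 2) := by
    simpa [real_inner_self_eq_norm_sq] using e.hasSum_inner_mul_inner χ χ
  have hφsum : HasSum (fun j => ⟪φ, (e j : H)⟫ * ⟪(e j : H), φ⟫) (‖φ‖ ^ 2) := by
    simpa [real_inner_self_eq_norm_sq] using e.hasSum_inner_mul_inner φ φ
  -- termwise bound
  have hterm : ∀ j, ⟪χ, (e j : H)⟫ * ⟪(e j : H), χ⟫
      ≤ (N / lam) * (⟪φ, (e j : H)⟫ * ⟪(e j : H), φ⟫) := by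
    intro j
    have hswap : ∀ x : H, ⟪x, (e j : H)⟫ = ⟪(e j : H), x⟫ := fun x => real_inner_comm _ x
    rw [hswap χ, hswap φ, hcoef j]
    have h1 : σ j ^ 2 / (σ j ^ 2 + lam) ^ 2 ≤ N / lam := by
      have : σ j ^ 2 / (σ j ^ 2 + lam) ^ 2
          = (σ j ^ 2 / (σ j ^ 2 + lam)) * (1 / (σ j ^ 2 + lam)) := by
        rw [div_mul_div_comm, mul_one, sq (σ j ^ 2 + lam)]
      rw [this, div_eq_mul_one_div N lam]
      exact mul_le_mul (hNj j) (by
        apply div_le_div_of_nonneg_left zero_le_one hlam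
        nlinarith [sq_nonneg (σ j)]) (by positivity) hN0
    have h2 : σ j * ⟪(e j : H), φ⟫ / (σ j ^ 2 + lam) * (σ j * ⟪(e j : H), φ⟫ / (σ j ^ 2 + lam))
        = (σ j ^ 2 / (σ j ^ 2 + lam) ^ 2) * (⟪(e j : H), φ⟫ * ⟪(e j : H), φ⟫) := by
      field_simp
    rw [h2]
    exact mul_le_mul_of_nonneg_right h1 (mul_self_nonneg _)
  have hle : ‖χ‖ ^ 2 ≤ (N / lam) * ‖φ‖ ^ 2 := by
    have := hasSum_le hterm hχsum (hφsum.mul_left (N / lam))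
    simpa using this
  have : ‖χ‖ ≤ Real.sqrt ((N / lam) * ‖φ‖ ^ 2) := by
    rw [show ‖χ‖ = Real.sqrt (‖χ‖ ^ 2) by rw [Real.sqrt_sq (norm_nonneg _)]]
    exact Real.sqrt_le_sqrt hle
  calc ‖(Binv ∘L L) φ‖ = ‖χ‖ := rfl
    _ ≤ Real.sqrt ((N / lam) * ‖φ‖ ^ 2) := this
    _ = Real.sqrt (N / lam) * ‖φ‖ := by
        rw [Real.sqrt_mul (by positivity), Real.sqrt_sq (norm_nonneg _)]
end

section
/- Suppose {λ_k}_{k≥1} is a nonincreasing sequence of nonnegative reals satisfying a k^{-2ς} ≤ λ_k ≤ b k^{-2ς} for constants a ≥ 0, b > 0 and ς > 1/4. Then for all 0 < λ < 1, the effective dimension N(λ) = Σ_{k≥1} λ_k²/(λ_k² + λ) satisfies (a^{1/(2ς)}/2) λ^{-1/(4ς)} − 1/2 ≤ N(λ) ≤ b^{1/(2ς)}(1 + 1/(4ς−1)) λ^{-1/(4ς)} + 1. -/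
open Real Finset

/-!
Each term `x / (x + λ)` of `N(λ)`, with `x = λ_k²`, lies in `[0, 1]`, is at least `1/2` once
`λ_k² ≥ λ`, and is at most `λ_k² / λ`. The power law `c² k^(-4ς)` crosses the level `λ` at
`K = (c² / λ)^(1/(4ς))`. For `c = a`, every term with `k ≤ K` is at least `1/2`, whence the lower
bound. For `c = b`, the first `⌊K⌋ + 1` terms are at most `1` and the tail is at most
`b²/λ · Σ_{k > K} k^(-4ς) ≤ b²/λ · K^(1-4ς)/(4ς-1) = K/(4ς-1)`; the last sum telescopes thanks
to Bernoulli's inequality `(1 + 1/x)^p ≥ 1 + p/x` for `p ≥ 1`.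
-/

lemma rpow_sub_one_mul_add_le_add_one_rpow {p x : ℝ} (hp : 1 ≤ p) (hx : 0 < x) :
    x ^ (p - 1) * (x + p) ≤ (x + 1) ^ p := by
  have hbern := one_add_mul_self_le_rpow_one_add
    (by linarith [one_div_pos.2 hx] : -1 ≤ 1 / x) hp
  calc x ^ (p - 1) * (x + p) = x ^ p * (1 + p * (1 / x)) := by
        rw [rpow_sub_one hx.ne']; field_simp
    _ ≤ x ^ p * (1 + 1 / x) ^ p := by gcongr
    _ = (x + 1) ^ p := by
        rw [← mul_rpow hx.le (by positivity)]; congr 1; field_simp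

lemma sub_one_mul_add_one_rpow_neg_le {p x : ℝ} (hp : 1 ≤ p) (hx : 0 < x) :
    (p - 1) * (x + 1) ^ (-p) ≤ x ^ (1 - p) - (x + 1) ^ (1 - p) := by
  have key := rpow_sub_one_mul_add_le_add_one_rpow hp hx
  have hx1 : 0 < x + 1 := by linarith
  have hxp : 0 < x ^ (p - 1) := rpow_pos_of_pos hx _
  have hx1p : 0 < (x + 1) ^ p := rpow_pos_of_pos hx1 _
  have e1 : x ^ (1 - p) = (x ^ (p - 1))⁻¹ := by rw [← rpow_neg hx.le, neg_sub]
  have e2 : (x + 1) ^ (1 - p) = (x + 1) * ((x + 1) ^ p)⁻¹ := by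
    rw [← rpow_neg hx1.le, sub_eq_add_neg, rpow_add hx1, rpow_one]
  rw [e1, e2, rpow_neg hx1.le]
  field_simp
  linarith

lemma sum_range_add_rpow_neg_le {p c : ℝ} (hp : 1 < p) (hc : 0 < c) (N : ℕ) :
    ∑ k ∈ range N, ((k : ℝ) + c + 1) ^ (-p) ≤ c ^ (1 - p) / (p - 1) := by
  set g : ℕ → ℝ := fun k => ((k : ℝ) + c) ^ (1 - p)
  have step (k : ℕ) : ((k : ℝ) + c + 1) ^ (-p) ≤ (g k - g (k + 1)) / (p - 1) := by
    rw [le_div_iff₀ (by linarith), mul_comm]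
    simpa [g, add_right_comm _ (1 : ℝ) c] using
      sub_one_mul_add_one_rpow_neg_le hp.le (x := k + c) (by positivity)
  calc _ ≤ ∑ k ∈ range N, (g k - g (k + 1)) / (p - 1) := sum_le_sum fun k _ => step k
    _ = (g 0 - g N) / (p - 1) := by rw [← sum_div, sum_range_sub']
    _ ≤ c ^ (1 - p) / (p - 1) := by
        gcongr
        simp only [g, Nat.cast_zero, zero_add, sub_le_self_iff]; positivity

lemma mul_rpow_neg_sq (c : ℝ) {y : ℝ} (hy : 0 ≤ y) (ς : ℝ) :
    (c * y ^ (-(2 * ς))) ^ 2 = c ^ 2 * y ^ (-(4 * ς)) := by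
  rw [mul_pow, ← rpow_natCast (y ^ _), ← rpow_mul hy]; ring_nf

noncomputable def effectiveDim (lam : ℕ → ℝ) (l : ℝ) : ℝ :=
  ∑' k : ℕ, lam (k + 1) ^ 2 / (lam (k + 1) ^ 2 + l)

/-- The point `(c² / l) ^ (1 / (4ς))` where `k ↦ c² k ^ (-4ς)` crosses the level `l`. -/
noncomputable def crossingIndex (c ς l : ℝ) : ℝ :=
  c ^ (1 / (2 * ς)) * l ^ (-(1 / (4 * ς)))

lemma sq_mul_crossingIndex_rpow {c ς l : ℝ} (hc : 0 < c) (hς : 0 < ς) (hl : 0 < l) :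
    c ^ 2 * crossingIndex c ς l ^ (-(4 * ς)) = l := by
  rw [crossingIndex, mul_rpow (by positivity) (by positivity), ← rpow_mul hc.le,
    ← rpow_mul hl.le]
  have e1 : 1 / (2 * ς) * -(4 * ς) = -(2 : ℕ) := by field_simp; norm_num
  have e2 : -(1 / (4 * ς)) * -(4 * ς) = 1 := by field_simp
  rw [e1, e2, rpow_one, rpow_neg hc.le, rpow_natCast]
  field_simp

lemma crossingIndex_pos {c ς l : ℝ} (hc : 0 < c) (hl : 0 < l) : 0 < crossingIndex c ς l := by
  unfold crossingIndex; positivity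

lemma sq_div_sq_add_le {x l c y ς : ℝ} (hl : 0 < l) (hx : 0 ≤ x) (hy : 0 ≤ y)
    (hxy : x ≤ c * y ^ (-(2 * ς))) : x ^ 2 / (x ^ 2 + l) ≤ c ^ 2 / l * y ^ (-(4 * ς)) :=
  calc x ^ 2 / (x ^ 2 + l) ≤ x ^ 2 / l := by gcongr; linarith [sq_nonneg x]
    _ ≤ (c * y ^ (-(2 * ς))) ^ 2 / l := by gcongr
    _ = c ^ 2 / l * y ^ (-(4 * ς)) := by rw [mul_rpow_neg_sq c hy]; ring

section EffectiveDim

variable {a b ς l : ℝ} {lam : ℕ → ℝ}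

lemma summable_effectiveDim (hς : 1 / 4 < ς) (hl : 0 < l) (hnn : ∀ k, 0 ≤ lam k)
    (hup : ∀ k : ℕ, 1 ≤ k → lam k ≤ b * (k : ℝ) ^ (-(2 * ς))) :
    Summable fun k : ℕ => lam (k + 1) ^ 2 / (lam (k + 1) ^ 2 + l) := by
  refine .of_nonneg_of_le (fun k => by positivity)
    (fun k => sq_div_sq_add_le hl (hnn _) (by positivity) (hup (k + 1) (by omega))) ?_
  exact ((summable_nat_add_iff 1).2
    (Real.summable_nat_rpow.2 (by linarith : -(4 * ς) < -1))).mul_left (b ^ 2 / l)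

lemma crossingIndex_div_two_sub_le_effectiveDim (ha : 0 ≤ a) (hς : 0 < ς) (hl : 0 < l)
    (hlow : ∀ k : ℕ, 1 ≤ k → a * (k : ℝ) ^ (-(2 * ς)) ≤ lam k)
    (hsum : Summable fun k : ℕ => lam (k + 1) ^ 2 / (lam (k + 1) ^ 2 + l)) :
    crossingIndex a ς l / 2 - 1 / 2 ≤ effectiveDim lam l := by
  have hterm (k : ℕ) : 0 ≤ lam (k + 1) ^ 2 / (lam (k + 1) ^ 2 + l) := by positivity
  rcases ha.eq_or_lt with rfl | ha
  · have : crossingIndex 0 ς l = 0 := by simp [crossingIndex, zero_rpow, hς.ne']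
    have hN : 0 ≤ effectiveDim lam l := tsum_nonneg hterm
    rw [this]
    linarith
  set M := crossingIndex a ς l
  have hM : 0 ≤ M := (crossingIndex_pos ha hl).le
  have half (k : ℕ) (hk : k < ⌊M⌋₊) : 1 / 2 ≤ lam (k + 1) ^ 2 / (lam (k + 1) ^ 2 + l) := by
    have hkM : ((k + 1 : ℕ) : ℝ) ≤ M := (Nat.cast_le.2 hk).trans (Nat.floor_le hM)
    have : l ≤ lam (k + 1) ^ 2 :=
      calc l = a ^ 2 * M ^ (-(4 * ς)) := (sq_mul_crossingIndex_rpow ha hς hl).symm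
        _ ≤ a ^ 2 * ((k + 1 : ℕ) : ℝ) ^ (-(4 * ς)) := by
          have := rpow_le_rpow_of_nonpos (by positivity) hkM (by linarith : -(4 * ς) ≤ 0)
          gcongr
        _ = (a * ((k + 1 : ℕ) : ℝ) ^ (-(2 * ς))) ^ 2 :=
          (mul_rpow_neg_sq a (Nat.cast_nonneg _) ς).symm
        _ ≤ lam (k + 1) ^ 2 := pow_le_pow_left₀ (by positivity) (hlow _ (by omega)) 2
    rw [div_le_div_iff₀ two_pos (by positivity)]
    linarith
  calc M / 2 - 1 / 2 ≤ ∑ _k ∈ range ⌊M⌋₊, (1 / 2 : ℝ) := by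
        simp only [sum_const, card_range, nsmul_eq_mul]
        linarith [Nat.sub_one_lt_floor M]
    _ ≤ ∑ k ∈ range ⌊M⌋₊, lam (k + 1) ^ 2 / (lam (k + 1) ^ 2 + l) :=
        sum_le_sum fun k hk => half k (mem_range.1 hk)
    _ ≤ effectiveDim lam l := hsum.sum_le_tsum _ fun k _ => hterm k

lemma effectiveDim_le_crossingIndex_mul_add_one (hb : 0 < b) (hς : 1 / 4 < ς) (hl : 0 < l)
    (hnn : ∀ k, 0 ≤ lam k) (hup : ∀ k : ℕ, 1 ≤ k → lam k ≤ b * (k : ℝ) ^ (-(2 * ς))) :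
    effectiveDim lam l ≤ crossingIndex b ς l * (1 + 1 / (4 * ς - 1)) + 1 := by
  set f : ℕ → ℝ := fun k => lam (k + 1) ^ 2 / (lam (k + 1) ^ 2 + l)
  set K := crossingIndex b ς l
  have hK : 0 < K := crossingIndex_pos hb hl
  have hp : 0 < 4 * ς - 1 := by linarith
  set n := ⌊K⌋₊ + 1
  have head : ∑ k ∈ range n, f k ≤ K + 1 :=
    calc ∑ k ∈ range n, f k ≤ ∑ _k ∈ range n, (1 : ℝ) :=
          sum_le_sum fun k _ => div_le_one_of_le₀ (by linarith) (by positivity)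
      _ ≤ K + 1 := by
          simp only [sum_const, card_range, nsmul_eq_mul, mul_one, n, Nat.cast_add_one]
          linarith [Nat.floor_le hK.le]
  have tail : ∑' k, f (k + n) ≤ K / (4 * ς - 1) := by
    refine Real.tsum_le_of_sum_range_le (fun k => by positivity) fun N => ?_
    calc ∑ k ∈ range N, f (k + n)
        ≤ ∑ k ∈ range N, b ^ 2 / l * ((k : ℝ) + n + 1) ^ (-(4 * ς)) := by
          refine sum_le_sum fun k _ => ?_
          have := sq_div_sq_add_le hl (hnn _) (by positivity) (hup (k + n + 1) (by omega))
          rwa [Nat.cast_add, Nat.cast_add, Nat.cast_one] at this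
      _ ≤ b ^ 2 / l * ((n : ℝ) ^ (1 - 4 * ς) / (4 * ς - 1)) := by
          rw [← mul_sum]
          gcongr
          exact sum_range_add_rpow_neg_le (by linarith) (by positivity) N
      _ ≤ b ^ 2 / l * (K ^ (1 - 4 * ς) / (4 * ς - 1)) := by
          have hKn : K ≤ n := by
            simp only [n, Nat.cast_add_one]; exact (Nat.lt_floor_add_one K).le
          have := rpow_le_rpow_of_nonpos hK hKn (by linarith : 1 - 4 * ς ≤ 0)
          exact mul_le_mul_of_nonneg_left (div_le_div_of_nonneg_right this hp.le) (by positivity)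
      _ = K * (b ^ 2 * K ^ (-(4 * ς))) / l / (4 * ς - 1) := by
          rw [sub_eq_add_neg, rpow_add hK, rpow_one]; ring
      _ = K / (4 * ς - 1) := by
          rw [sq_mul_crossingIndex_rpow hb (by linarith) hl, mul_div_cancel_right₀ _ hl.ne']
  calc effectiveDim lam l = ∑ k ∈ range n, f k + ∑' k, f (k + n) :=
        ((summable_effectiveDim hς hl hnn hup).sum_add_tsum_nat_add n).symm
    _ ≤ K + 1 + K / (4 * ς - 1) := add_le_add head tail
    _ = K * (1 + 1 / (4 * ς - 1)) + 1 := by ring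

end EffectiveDim

theorem stmt11_general (a b ς : ℝ) (ha : 0 ≤ a) (hb : 0 < b) (hς : 1 / 4 < ς)
    (lam : ℕ → ℝ) (hnn : ∀ k, 0 ≤ lam k)
    (hlow : ∀ k : ℕ, 1 ≤ k → a * (k : ℝ) ^ (-(2 * ς)) ≤ lam k)
    (hup : ∀ k : ℕ, 1 ≤ k → lam k ≤ b * (k : ℝ) ^ (-(2 * ς)))
    (l : ℝ) (hl0 : 0 < l) :
    a ^ (1 / (2 * ς)) / 2 * l ^ (-(1 / (4 * ς))) - 1 / 2
      ≤ ∑' k : ℕ, lam (k + 1) ^ 2 / (lam (k + 1) ^ 2 + l) ∧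
    ∑' k : ℕ, lam (k + 1) ^ 2 / (lam (k + 1) ^ 2 + l)
      ≤ b ^ (1 / (2 * ς)) * (1 + 1 / (4 * ς - 1)) * l ^ (-(1 / (4 * ς))) + 1 := by
  have lower := crossingIndex_div_two_sub_le_effectiveDim ha (by linarith) hl0 hlow
    (summable_effectiveDim hς hl0 hnn hup)
  have upper := effectiveDim_le_crossingIndex_mul_add_one hb hς hl0 hnn hup
  simp only [crossingIndex, effectiveDim] at lower upper
  constructor <;> linarith

theorem stmt11 (a b ς : ℝ) (ha : 0 ≤ a) (hb : 0 < b) (hς : 1 / 4 < ς)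
    (lam : ℕ → ℝ) (hnn : ∀ k, 0 ≤ lam k)
    (hmono : ∀ k l : ℕ, 1 ≤ k → k ≤ l → lam l ≤ lam k)
    (hlow : ∀ k : ℕ, 1 ≤ k → a * (k : ℝ) ^ (-(2 * ς)) ≤ lam k)
    (hup : ∀ k : ℕ, 1 ≤ k → lam k ≤ b * (k : ℝ) ^ (-(2 * ς)))
    (l : ℝ) (hl0 : 0 < l) (hl1 : l < 1) :
    a ^ (1 / (2 * ς)) / 2 * l ^ (-(1 / (4 * ς))) - 1 / 2
      ≤ ∑' k : ℕ, lam (k + 1) ^ 2 / (lam (k + 1) ^ 2 + l) ∧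
    ∑' k : ℕ, lam (k + 1) ^ 2 / (lam (k + 1) ^ 2 + l)
      ≤ b ^ (1 / (2 * ς)) * (1 + 1 / (4 * ς - 1)) * l ^ (-(1 / (4 * ς))) + 1 :=
  stmt11_general a b ς ha hb hς lam hnn hlow hup l hl0
end

section
/- Let L be a compact self-adjoint nonnegative operator on a Hilbert space with ‖L‖ ≤ C₁, and let φ* = L^{β/2} w with ‖w‖ ≤ R for some β > 0. Define φ_λ = (L² + λI)^{-1} L² φ*. Then ‖φ_λ − φ*‖ ≤ C(β,C₁) R λ^{min{β/4,1}}, where C(β,C₁) = (β/4)^{β/4}(1−β/4)^{1−β/4} if 0 < β ≤ 4 and C(β,C₁) = C₁^{β/2−2} if β > 4. -/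
/-!
In the eigenbasis of `L` the error `φ_λ - φ*` has coefficients
`-λ σⱼ^{β/2} / (σⱼ² + λ) · ⟪eⱼ, w⟫`, so by Parseval it suffices to bound the filter
`λ s^{β/4} / (s + λ)` uniformly for `s ∈ [0, C₁²]`. For `β ≤ 4` this is weighted AM–GM,
`s^a λ^{1-a} ≤ a^a (1-a)^{1-a} (s + λ)` with `a = β/4`; for `β > 4` it follows from
`s^{β/4} ≤ (C₁²)^{β/4-1} s`.
-/

open ContinuousLinearMap

namespace Real

theorem rpow_mul_rpow_one_sub_le {a x y : ℝ} (ha₀ : 0 < a) (ha₁ : a ≤ 1) (hx : 0 ≤ x)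
    (hy : 0 ≤ y) : x ^ a * y ^ (1 - a) ≤ a ^ a * (1 - a) ^ (1 - a) * (x + y) := by
  rcases ha₁.eq_or_lt with rfl | ha₁
  · simpa using hy
  have hb : 0 < 1 - a := sub_pos.mpr ha₁
  have amgm := geom_mean_le_arith_mean2_weighted ha₀.le hb.le (div_nonneg hx ha₀.le)
    (div_nonneg hy hb.le) (add_sub_cancel a 1)
  rw [mul_div_cancel₀ x ha₀.ne', mul_div_cancel₀ y hb.ne'] at amgm
  calc x ^ a * y ^ (1 - a)
      = (a * (x / a)) ^ a * ((1 - a) * (y / (1 - a))) ^ (1 - a) := by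
        rw [mul_div_cancel₀ x ha₀.ne', mul_div_cancel₀ y hb.ne']
    _ = a ^ a * (1 - a) ^ (1 - a) * ((x / a) ^ a * (y / (1 - a)) ^ (1 - a)) := by
        rw [mul_rpow ha₀.le (div_nonneg hx ha₀.le), mul_rpow hb.le (div_nonneg hy hb.le)]
        ring
    _ ≤ a ^ a * (1 - a) ^ (1 - a) * (x + y) := by gcongr

theorem mul_rpow_div_add_le_of_le_one {a s lam : ℝ} (ha₀ : 0 < a) (ha₁ : a ≤ 1) (hs : 0 ≤ s)
    (hlam : 0 < lam) : lam * s ^ a / (s + lam) ≤ a ^ a * (1 - a) ^ (1 - a) * lam ^ a := by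
  rw [div_le_iff₀ (by positivity)]
  calc lam * s ^ a = s ^ a * lam ^ (1 - a) * lam ^ a := by
        rw [mul_assoc, ← rpow_add hlam, sub_add_cancel, rpow_one, mul_comm]
    _ ≤ a ^ a * (1 - a) ^ (1 - a) * (s + lam) * lam ^ a :=
        mul_le_mul_of_nonneg_right (rpow_mul_rpow_one_sub_le ha₀ ha₁ hs hlam.le) (by positivity)
    _ = _ := by ring

theorem mul_rpow_div_add_le_of_one_le {a s lam M : ℝ} (ha : 1 ≤ a) (hs : 0 ≤ s) (hsM : s ≤ M)
    (hlam : 0 < lam) : lam * s ^ a / (s + lam) ≤ M ^ (a - 1) * lam := by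
  rw [div_le_iff₀ (by positivity)]
  have hM : s ^ (a - 1) ≤ M ^ (a - 1) := rpow_le_rpow hs hsM (sub_nonneg.mpr ha)
  have hM₀ : 0 ≤ M ^ (a - 1) := (rpow_nonneg hs _).trans hM
  calc lam * s ^ a = lam * (s ^ (a - 1) * s) := by
        rw [← rpow_add_one' hs (by linarith), sub_add_cancel]
    _ ≤ lam * (M ^ (a - 1) * s) := by gcongr
    _ ≤ M ^ (a - 1) * lam * (s + lam) := by nlinarith [mul_nonneg hM₀ hlam.le]

end Real

noncomputable def tikhonovConst (β C₁ : ℝ) : ℝ :=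
  if β ≤ 4 then (β / 4) ^ (β / 4) * (1 - β / 4) ^ (1 - β / 4) else C₁ ^ (β / 2 - 2)

theorem tikhonov_filter_le {β C₁ lam t : ℝ} (hβ : 0 < β) (hlam : 0 < lam) (ht : 0 ≤ t)
    (htC : t ≤ C₁) :
    lam * t ^ (β / 2) / (t ^ 2 + lam) ≤ tikhonovConst β C₁ * lam ^ min (β / 4) 1 := by
  have hsq {x : ℝ} (hx : 0 ≤ x) (y : ℝ) : x ^ (2 * y) = (x ^ 2) ^ y := by
    rw [← Real.rpow_natCast_mul hx]
    norm_num
  rw [show β / 2 = 2 * (β / 4) by ring, hsq ht]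
  unfold tikhonovConst
  split_ifs with hβ4
  · rw [min_eq_left (by linarith)]
    exact Real.mul_rpow_div_add_le_of_le_one (by positivity) (by linarith) (sq_nonneg t) hlam
  · rw [min_eq_right (by linarith : (1 : ℝ) ≤ β / 4), Real.rpow_one,
      show β / 2 - 2 = 2 * (β / 4 - 1) by ring, hsq (ht.trans htC)]
    exact Real.mul_rpow_div_add_le_of_one_le (by linarith) (sq_nonneg t)
      (pow_le_pow_left₀ ht htC 2) hlam

theorem ContinuousLinearMap.norm_le_opNorm_of_apply_eq_smul {𝕜 E : Type*}
    [NontriviallyNormedField 𝕜] [NormedAddCommGroup E] [NormedSpace 𝕜 E] (L : E →L[𝕜] E)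
    {c : 𝕜} {v : E} (hv : ‖v‖ = 1) (h : L v = c • v) : ‖c‖ ≤ ‖L‖ := by
  simpa [h, norm_smul, hv] using L.unit_le_opNorm v hv.le

namespace HilbertBasis

section RCLike

variable {ι 𝕜 E : Type*} [RCLike 𝕜] [NormedAddCommGroup E] [InnerProductSpace 𝕜 E]

theorem repr_apply_of_apply_eq_smul (e : HilbertBasis ι 𝕜 E) {L : E →L[𝕜] E} {σ : ι → 𝕜}
    (hL : ∀ i, L (e i) = σ i • e i) (x : E) (j : ι) :
    e.repr (L x) j = σ j * e.repr x j := by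
  suffices (innerSL 𝕜 (e j)).comp L = σ j • innerSL 𝕜 (e j) by
    simpa [e.repr_apply_apply] using congr($this x)
  refine ext_on (Submodule.dense_iff_topologicalClosure_eq_top.mpr e.dense_span) ?_
  rintro _ ⟨i, rfl⟩
  rcases eq_or_ne i j with rfl | hij
  · simp [hL]
  · simp [hL, e.orthonormal.inner_eq_zero hij.symm]

theorem norm_le_of_forall_norm_repr_le (e : HilbertBasis ι 𝕜 E) {x y : E}
    (h : ∀ i, ‖e.repr x i‖ ≤ ‖e.repr y i‖) : ‖x‖ ≤ ‖y‖ := by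
  simpa only [LinearIsometryEquiv.norm_map] using lp.norm_mono two_ne_zero h

end RCLike

theorem repr_tikhonov_sub {ι E : Type*} [NormedAddCommGroup E] [InnerProductSpace ℝ E]
    (e : HilbertBasis ι ℝ E) {L : E →L[ℝ] E} {σ : ι → ℝ} (hL : ∀ i, L (e i) = σ i • e i)
    {lam : ℝ} (hlam : 0 < lam) {φ φlam : E}
    (hφlam : (L ∘L L + lam • ContinuousLinearMap.id ℝ E) φlam = (L ∘L L) φ) (j : ι) :
    e.repr (φlam - φ) j = -(lam / (σ j ^ 2 + lam)) * e.repr φ j := by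
  have hj := congr(e.repr $hφlam j)
  simp only [add_apply, comp_apply, smul_apply, id_apply, map_add, map_smul, lp.coeFn_add,
    lp.coeFn_smul, Pi.add_apply, Pi.smul_apply, smul_eq_mul,
    e.repr_apply_of_apply_eq_smul hL] at hj
  rw [map_sub, lp.coeFn_sub, Pi.sub_apply]
  field_simp
  linear_combination hj

end HilbertBasis

theorem stmt17_general {H : Type*} [NormedAddCommGroup H] [InnerProductSpace ℝ H] [CompleteSpace H]
    (L : H →L[ℝ] H) (C₁ β R lam : ℝ) (hβ : 0 < β)
    (hlam : 0 < lam) (hLnorm : ‖L‖ ≤ C₁)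
    (e : HilbertBasis ℕ ℝ H)
    (σ : ℕ → ℝ) (hσ : ∀ j, 0 ≤ σ j) (hL : ∀ j, L (e j) = σ j • e j)
    (w φstar φlam : H) (hw : ‖w‖ ≤ R)
    (hsource : ∀ j, (inner ℝ φstar (e j) : ℝ) = σ j ^ (β / 2) * (inner ℝ w (e j) : ℝ))
    (hφlam : (L ∘L L + lam • ContinuousLinearMap.id ℝ H) φlam = (L ∘L L) φstar) :
    ‖φlam - φstar‖ ≤
      (if β ≤ 4 then (β / 4) ^ (β / 4) * (1 - β / 4) ^ (1 - β / 4)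
       else C₁ ^ (β / 2 - 2)) * R * lam ^ min (β / 4) 1 := by
  set K := tikhonovConst β C₁ * lam ^ min (β / 4) 1
  have hfilter (j : ℕ) : lam * σ j ^ (β / 2) / (σ j ^ 2 + lam) ≤ K := by
    refine tikhonov_filter_le hβ hlam (hσ j) ?_
    simpa [abs_of_nonneg (hσ j)] using
      (L.norm_le_opNorm_of_apply_eq_smul (e.orthonormal.1 j) (hL j)).trans hLnorm
  have hfilter_nonneg (j : ℕ) : 0 ≤ lam * σ j ^ (β / 2) / (σ j ^ 2 + lam) := by
    have := Real.rpow_nonneg (hσ j) (β / 2)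
    positivity
  have hK : 0 ≤ K := (hfilter_nonneg 0).trans (hfilter 0)
  have hcoeff (j : ℕ) : e.repr (φlam - φstar) j =
      -(lam * σ j ^ (β / 2) / (σ j ^ 2 + lam)) * e.repr w j := by
    rw [e.repr_tikhonov_sub hL hlam hφlam, e.repr_apply_apply, real_inner_comm, hsource,
      e.repr_apply_apply, real_inner_comm]
    ring
  calc ‖φlam - φstar‖ ≤ ‖K • w‖ := e.norm_le_of_forall_norm_repr_le fun j => by
        rw [map_smul, lp.coeFn_smul, Pi.smul_apply, hcoeff, norm_mul, norm_smul, norm_neg,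
          Real.norm_of_nonneg hK, Real.norm_of_nonneg (hfilter_nonneg j)]
        gcongr
        exact hfilter j
    _ ≤ K * R := by rw [norm_smul, Real.norm_of_nonneg hK]; gcongr
    _ = _ := mul_right_comm _ _ _

/-- Regularization error bound: for a compact self-adjoint nonnegative operator `L`
with `‖L‖ ≤ C₁`, diagonal in a Hilbert basis `e` with eigenvalues `σ j ≥ 0`, a source
element `φ* = L^{β/2} w` (encoded coefficientwise) with `‖w‖ ≤ R`, and the Tikhonov
approximation `φ_λ = (L² + λI)⁻¹ L² φ*`, one has
`‖φ_λ − φ*‖ ≤ C(β,C₁) R λ^{min{β/4,1}}`. -/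
theorem stmt17 {H : Type*} [NormedAddCommGroup H] [InnerProductSpace ℝ H] [CompleteSpace H]
    (L : H →L[ℝ] H) (C₁ β R lam : ℝ) (hC : 0 < C₁) (hβ : 0 < β) (hR : 0 ≤ R)
    (hlam : 0 < lam) (hLnorm : ‖L‖ ≤ C₁)
    (e : HilbertBasis ℕ ℝ H)
    (σ : ℕ → ℝ) (hσ : ∀ j, 0 ≤ σ j) (hL : ∀ j, L (e j) = σ j • e j)
    (w φstar φlam : H) (hw : ‖w‖ ≤ R)
    (hsource : ∀ j, (inner ℝ φstar (e j) : ℝ) = σ j ^ (β / 2) * (inner ℝ w (e j) : ℝ))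
    (hφlam : (L ∘L L + lam • ContinuousLinearMap.id ℝ H) φlam = (L ∘L L) φstar) :
    ‖φlam - φstar‖ ≤
      (if β ≤ 4 then (β / 4) ^ (β / 4) * (1 - β / 4) ^ (1 - β / 4)
       else C₁ ^ (β / 2 - 2)) * R * lam ^ min (β / 4) 1 :=
  stmt17_general L C₁ β R lam hβ hlam hLnorm e σ hσ hL w φstar φlam hw hsource hφlam
end
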